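/- (CBF implies forward invariance.) Let f : ℝ^{n_x} × ℝ^{n_u} → ℝ^{n_x}, let h_S : ℝ^{n_x} → ℝ be continuously differentiable, let S = {x ∈ ℝ^{n_x} : h_S(x) ≥ 0}, and assume ∇h_S(x) ≠ 0 for every x in the topological boundary ∂S of S. Let α : ℝ → ℝ be an extended class 𝒦 function and let κ : ℝ^{n_x} → ℝ^{n_u} be a Lipschitz continuous control policy such that for every x ∈ S one has ⟨∇h_S(x), f(x, κ(x))⟩ ≥ −α(h_S(x)). Assume the closed-loop vector field x ↦ f(x, κ(x)) is locally Lipschitz with all maximal forward solutions defined on [0,∞). Then S is forward invariant for ẋ = f(x, κ(x)): every solution with x(0) ∈ S satisfies x(t) ∈ S for all t ≥ 0. -/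

import Mathlib

/-! Write `d(t)` for the distance from the trajectory to `S`. At a boundary point the CBF
condition gives `⟪∇hS, f⟫ ≥ -α 0 = 0`, and since `∇hS ≠ 0` there, every direction `v` with
`⟪∇hS, v⟫ ≥ 0` is a limit of directions entering `S`; so the vector field is subtangent to `S`:
`dist(q + τ f(q), S) = o(τ)` at each `q ∈ S`. Comparing `x(t)` with its nearest point `q ∈ S`
and using the local Lipschitz constant `K` of the field, the upper right Dini derivative of `d`
is at most `K d`; Grönwall's inequality and `d(t₀) = 0` give `d ≡ 0` near `t₀`, and a
continuity argument propagates this to all `t ≥ 0` (Nagumo's theorem). -/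

open scoped RealInnerProductSpace
open Metric Set Filter Topology Asymptotics

section NormedSpace

variable {E : Type*} [NormedAddCommGroup E] [NormedSpace ℝ E]

lemma isLittleO_infDist_add_smul_of_mem_closure {S : Set E} {q v : E}
    (hv : v ∈ closure {w | ∀ᶠ τ in 𝓝[>] (0 : ℝ), q + τ • w ∈ S}) :
    (fun τ : ℝ => infDist (q + τ • v) S) =o[𝓝[>] 0] id := by
  refine isLittleO_iff.2 fun c hc => ?_
  obtain ⟨w, hw, hvw⟩ := Metric.mem_closure_iff.1 hv c hc
  filter_upwards [hw, self_mem_nhdsWithin] with τ hτS (hτ : 0 < τ)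
  calc ‖infDist (q + τ • v) S‖ = infDist (q + τ • v) S := Real.norm_of_nonneg infDist_nonneg
    _ ≤ dist (q + τ • v) (q + τ • w) := infDist_le_dist_of_mem hτS
    _ = τ * dist v w := by rw [dist_add_left, dist_smul₀, Real.norm_of_nonneg hτ.le]
    _ ≤ c * ‖id τ‖ := by
      rw [id, Real.norm_of_nonneg hτ.le, mul_comm c]
      gcongr

lemma eventually_add_smul_mem_of_mem_interior {S : Set E} {q : E} (hq : q ∈ interior S)
    (w : E) : ∀ᶠ τ in 𝓝 (0 : ℝ), q + τ • w ∈ S := by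
  have hline : Tendsto (fun τ : ℝ => q + τ • w) (𝓝 0) (𝓝 q) := by
    have : Continuous fun τ : ℝ => q + τ • w := by fun_prop
    simpa using this.tendsto 0
  exact hline.eventually (mem_interior_iff_mem_nhds.1 hq)

lemma frequently_slope_infDist_lt {S : Set E} {x : ℝ → E} {t K r : ℝ} {q v w : E}
    (hx : HasDerivWithinAt x v (Ici t) t) (hq : dist (x t) q = infDist (x t) S)
    (hvw : ‖v - w‖ ≤ K * infDist (x t) S)
    (hw : (fun τ : ℝ => infDist (q + τ • w) S) =o[𝓝[>] 0] id)
    (hr : K * infDist (x t) S < r) :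
    ∃ᶠ s in 𝓝[>] t, (s - t)⁻¹ * (infDist (x s) S - infDist (x t) S) < r := by
  set d := infDist (x t) S
  set ε := (r - K * d) / 3 with hε_def
  have hε : 0 < ε := by rw [hε_def]; linarith
  have hshift : Tendsto (fun s => s - t) (𝓝[>] t) (𝓝[>] 0) := by
    refine tendsto_nhdsWithin_of_tendsto_nhds_of_eventually_within _ ?_ ?_
    · simpa using ((continuous_sub_right t).tendsto t).mono_left nhdsWithin_le_nhds
    · filter_upwards [self_mem_nhdsWithin] with s (hs : t < s) using sub_pos.2 hs
  refine Eventually.frequently ?_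
  filter_upwards [nhdsWithin_mono _ Ioi_subset_Ici_self
      ((hasDerivWithinAt_iff_isLittleO.1 hx).def hε), hshift.eventually (hw.def hε),
      self_mem_nhdsWithin] with s hxs hws (hts : t < s)
  set τ := s - t
  have hτ : 0 < τ := sub_pos.2 hts
  rw [Real.norm_of_nonneg hτ.le] at hxs
  rw [id, Real.norm_of_nonneg hτ.le, Real.norm_of_nonneg infDist_nonneg] at hws
  have hstep : infDist (x s) S ≤ d + (K * d + 2 * ε) * τ :=
    calc infDist (x s) S ≤ infDist (q + τ • w) S + dist (x s) (q + τ • w) :=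
          infDist_le_infDist_add_dist
      _ ≤ ε * τ + (‖x s - x t - τ • v‖ + ‖x t - q‖ + ‖τ • (v - w)‖) := by
          have hsplit : x s - (q + τ • w) = (x s - x t - τ • v) + (x t - q) + τ • (v - w) := by
            module
          rw [dist_eq_norm, hsplit]
          exact add_le_add hws norm_add₃_le
      _ ≤ ε * τ + (ε * τ + d + τ * (K * d)) := by
          rw [← dist_eq_norm (x t) q, hq, norm_smul, Real.norm_of_nonneg hτ.le]
          gcongr
      _ = d + (K * d + 2 * ε) * τ := by ring
  rw [inv_mul_lt_iff₀ hτ]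
  calc infDist (x s) S - d ≤ (K * d + 2 * ε) * τ := by linarith
    _ < τ * r := by rw [mul_comm]; gcongr; linarith

variable [ProperSpace E] {g : E → E} {S : Set E}

/-- The Dini estimate compares `x t` with a nearest point `q ∈ S`, so `g` only needs to be
Lipschitz on the balls `closedBall (x t) (infDist (x t) S)`, which contain both. -/
lemma mapsTo_Icc_of_lipschitzOnWith {K : NNReal} {U : Set E} (hg : LipschitzOnWith K g U)
    (hS : IsClosed S) (hsub : ∀ q ∈ S, (fun τ : ℝ => infDist (q + τ • g q) S) =o[𝓝[>] 0] id)
    {x : ℝ → E} {a b : ℝ} (hx : ∀ t ∈ Ico a b, HasDerivWithinAt x (g (x t)) (Ici t) t)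
    (hxc : ContinuousOn x (Icc a b))
    (hU : ∀ t ∈ Icc a b, closedBall (x t) (infDist (x t) S) ⊆ U) (ha : x a ∈ S) :
    MapsTo x (Icc a b) S := by
  have hne : S.Nonempty := ⟨_, ha⟩
  have hdini : ∀ t ∈ Ico a b, ∀ r, K * infDist (x t) S < r →
      ∃ᶠ s in 𝓝[>] t, (s - t)⁻¹ * (infDist (x s) S - infDist (x t) S) < r := by
    intro t ht r hr
    obtain ⟨q, hqS, hq⟩ := hS.exists_infDist_eq_dist hne (x t)
    have hball := hU t (Ico_subset_Icc_self ht)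
    have hlip : ‖g (x t) - g q‖ ≤ K * infDist (x t) S := by
      rw [← dist_eq_norm, hq]
      exact hg.dist_le_mul _ (hball (mem_closedBall_self infDist_nonneg)) _
        (hball (by rw [mem_closedBall, dist_comm, hq]))
    exact frequently_slope_infDist_lt (hx t ht) hq.symm hlip (hsub q hqS) hr
  have hgronwall := le_gronwallBound_of_liminf_deriv_right_le
    ((continuous_infDist_pt S).comp_continuousOn hxc) hdini (infDist_zero_of_mem ha).le
    (fun t _ => (add_zero _).ge)
  intro t ht
  have hdist := hgronwall t ht
  rw [gronwallBound_ε0_δ0] at hdist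
  exact (hS.mem_iff_infDist_zero hne).2 (le_antisymm hdist infDist_nonneg)

lemma eventually_mem_of_isLittleO_infDist (hg : LocallyLipschitz g) (hS : IsClosed S)
    (hsub : ∀ q ∈ S, (fun τ : ℝ => infDist (q + τ • g q) S) =o[𝓝[>] 0] id)
    {x : ℝ → E} {t₀ : ℝ} (hx : ∀ t ≥ t₀, HasDerivAt x (g (x t)) t) (h₀ : x t₀ ∈ S) :
    ∀ᶠ t in 𝓝[>] t₀, x t ∈ S := by
  obtain ⟨K, U, hU, hgU⟩ := hg (x t₀)
  obtain ⟨r, hr, hball⟩ := Metric.mem_nhds_iff.1 hU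
  have hnear : ∀ᶠ t in 𝓝[≥] t₀, dist (x t) (x t₀) < r / 2 :=
    nhdsWithin_le_nhds ((hx t₀ le_rfl).continuousAt.eventually (ball_mem_nhds _ (half_pos hr)))
  obtain ⟨u, htu, hu⟩ := mem_nhdsGE_iff_exists_Icc_subset.1 hnear
  refine mem_of_superset (Icc_mem_nhdsGT htu) (mapsTo_Icc_of_lipschitzOnWith hgU hS hsub
    (fun t ht => (hx t ht.1).hasDerivWithinAt)
    (fun t ht => (hx t ht.1).continuousAt.continuousWithinAt) (fun t ht y hy => hball ?_) h₀)
  have hxt : dist (x t) (x t₀) < r / 2 := hu ht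
  rw [mem_closedBall] at hy
  rw [mem_ball]
  linarith [dist_triangle y (x t) (x t₀), infDist_le_dist_of_mem (s := S) h₀ (x := x t)]

theorem forward_invariant_of_isLittleO_infDist (hg : LocallyLipschitz g) (hS : IsClosed S)
    (hsub : ∀ q ∈ S, (fun τ : ℝ => infDist (q + τ • g q) S) =o[𝓝[>] 0] id)
    {x : ℝ → E} (hx : ∀ t ≥ 0, HasDerivAt x (g (x t)) t) (h₀ : x 0 ∈ S) :
    ∀ t ≥ 0, x t ∈ S := by
  intro T hT
  have hclosed : IsClosed (x ⁻¹' S ∩ Icc 0 T) := by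
    rw [inter_comm]
    exact ContinuousOn.preimage_isClosed_of_isClosed
      (fun t ht => (hx t ht.1).continuousAt.continuousWithinAt) isClosed_Icc hS
  refine hclosed.Icc_subset_of_forall_mem_nhdsWithin h₀ (fun t ht => ?_) ⟨hT, le_rfl⟩
  exact eventually_mem_of_isLittleO_infDist hg hS hsub
    (fun s hs => hx s (ht.2.1.trans hs)) ht.1

end NormedSpace

section InnerProductSpace

variable {F : Type*} [NormedAddCommGroup F] [InnerProductSpace ℝ F] [CompleteSpace F]

lemma eventually_lt_add_smul_of_inner_gradient_pos {h : F → ℝ} {g q w : F}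
    (hd : HasGradientAt h g q) (hw : 0 < ⟪g, w⟫) :
    ∀ᶠ τ in 𝓝[>] (0 : ℝ), h q < h (q + τ • w) := by
  have hslope := (hd.hasFDerivAt.hasLineDerivAt w).tendsto_slope_zero_right
  filter_upwards [hslope.eventually (eventually_gt_nhds hw), self_mem_nhdsWithin]
    with τ hτ (hτpos : 0 < τ)
  rw [smul_eq_mul] at hτ
  exact sub_pos.1 (pos_of_mul_pos_right hτ (inv_pos.2 hτpos).le)

lemma isLittleO_infDist_superlevel_of_inner_gradient_nonneg {h : F → ℝ} {g q v : F}
    (hd : HasGradientAt h g q) (hg : g ≠ 0) (hq : 0 ≤ h q) (hv : 0 ≤ ⟪g, v⟫) :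
    (fun τ : ℝ => infDist (q + τ • v) {x | 0 ≤ h x}) =o[𝓝[>] 0] id := by
  refine isLittleO_infDist_add_smul_of_mem_closure
    (mem_closure_of_tendsto (f := fun c : ℝ => v + c • g) (b := 𝓝[>] 0) ?_ ?_)
  · have : Continuous fun c : ℝ => v + c • g := by fun_prop
    simpa using (this.tendsto 0).mono_left nhdsWithin_le_nhds
  · filter_upwards [self_mem_nhdsWithin] with c (hc : 0 < c)
    have hinner : 0 < ⟪g, v + c • g⟫ := by
      rw [inner_add_right, inner_smul_right, real_inner_self_eq_norm_sq]
      have := mul_pos hc (pow_pos (norm_pos_iff.2 hg) 2)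
      linarith
    filter_upwards [eventually_lt_add_smul_of_inner_gradient_pos hd hinner] with τ hτ
    exact hq.trans hτ.le

end InnerProductSpace

theorem cbf_implies_forward_invariance_general {nx nu : ℕ}
    (f : EuclideanSpace ℝ (Fin nx) → (Fin nu → ℝ) → EuclideanSpace ℝ (Fin nx))
    (hS : EuclideanSpace ℝ (Fin nx) → ℝ)
    (hC1 : ContDiff ℝ 1 hS)
    (S : Set (EuclideanSpace ℝ (Fin nx)))
    (hSdef : S = {x | hS x ≥ 0})
    (hgrad : ∀ x ∈ frontier S, gradient hS x ≠ 0)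
    (α : ℝ → ℝ) (hα0 : α 0 = 0)
    (κ : EuclideanSpace ℝ (Fin nx) → (Fin nu → ℝ))
    (hcbf : ∀ x ∈ S, ⟪gradient hS x, f x (κ x)⟫ ≥ -α (hS x))
    (hcl : LocallyLipschitz (fun x => f x (κ x))) :
    ∀ x : ℝ → EuclideanSpace ℝ (Fin nx),
      (∀ t : ℝ, 0 ≤ t → HasDerivAt x (f (x t) (κ (x t))) t) →
      x 0 ∈ S → ∀ t : ℝ, 0 ≤ t → x t ∈ S := by
  intro x hx hx0
  have hclosed : IsClosed S := hSdef ▸ isClosed_le continuous_const hC1.continuous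
  refine forward_invariant_of_isLittleO_infDist hcl hclosed (fun q hq => ?_) hx hx0
  rcases (closure_eq_interior_union_frontier S ▸ subset_closure hq :) with hint | hfr
  · exact isLittleO_infDist_add_smul_of_mem_closure
      (subset_closure (nhdsWithin_le_nhds (eventually_add_smul_mem_of_mem_interior hint _)))
  · subst hSdef
    have hq0 : 0 = hS q := frontier_le_subset_eq continuous_const hC1.continuous hfr
    refine isLittleO_infDist_superlevel_of_inner_gradient_nonneg
      (hC1.differentiable one_ne_zero q).hasGradientAt (hgrad q hfr) hq ?_
    simpa [← hq0, hα0] using hcbf q hq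

/-- **CBF implies forward invariance.**
If `hS` is a continuously differentiable control barrier function
(`⟨∇hS(x), f(x, κ(x))⟩ ≥ -α (hS x)` on `S = {x | hS x ≥ 0}` for an extended
class-𝒦 function `α`), `∇hS(x) ≠ 0` on the boundary of `S`, `κ` is Lipschitz,
and the closed-loop vector field is locally Lipschitz with forward-global
solutions, then `S` is forward invariant for `ẋ = f(x, κ(x))`. -/
theorem cbf_implies_forward_invariance {nx nu : ℕ}
    (f : EuclideanSpace ℝ (Fin nx) → (Fin nu → ℝ) → EuclideanSpace ℝ (Fin nx))
    (hS : EuclideanSpace ℝ (Fin nx) → ℝ)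
    (hC1 : ContDiff ℝ 1 hS)
    (S : Set (EuclideanSpace ℝ (Fin nx)))
    (hSdef : S = {x | hS x ≥ 0})
    (hgrad : ∀ x ∈ frontier S, gradient hS x ≠ 0)
    (α : ℝ → ℝ) (hαcont : Continuous α) (hαmono : StrictMono α) (hα0 : α 0 = 0)
    (κ : EuclideanSpace ℝ (Fin nx) → (Fin nu → ℝ))
    (hκlip : ∃ L : NNReal, LipschitzWith L κ)
    (hcbf : ∀ x ∈ S, ⟪gradient hS x, f x (κ x)⟫ ≥ -α (hS x))
    (hcl : LocallyLipschitz (fun x => f x (κ x)))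
    (hglobal : ∀ x0 : EuclideanSpace ℝ (Fin nx),
      ∃ x : ℝ → EuclideanSpace ℝ (Fin nx),
        x 0 = x0 ∧ ∀ t : ℝ, 0 ≤ t → HasDerivAt x (f (x t) (κ (x t))) t) :
    ∀ x : ℝ → EuclideanSpace ℝ (Fin nx),
      (∀ t : ℝ, 0 ≤ t → HasDerivAt x (f (x t) (κ (x t))) t) →
      x 0 ∈ S → ∀ t : ℝ, 0 ≤ t → x t ∈ S :=
  cbf_implies_forward_invariance_general f hS hC1 S hSdef hgrad α hα0 κ hcbf hcl
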